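/- For all x,y,z ∈ ℝ and all g,h ∈ B, the bivectors Π satisfy the multiplicativity identity Π_{x,z}(gh) = Π_{x,y}(g)·h + g·Π_{y,z}(h) in M₂(ℂ) ⊗_ℝ M₂(ℂ). -/
import Mathlib


open TensorProduct Complex Matrix

noncomputable section

abbrev M2 : Type := Matrix (Fin 2) (Fin 2) ℂ

/-- `u∧v = u⊗v − v⊗u` in `M₂(ℂ) ⊗_ℝ M₂(ℂ)`. -/
def wedge (u v : M2) : M2 ⊗[ℝ] M2 := u ⊗ₜ[ℝ] v - v ⊗ₜ[ℝ] u

def E : M2 := !![0, 0; Complex.I, 0]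
def F : M2 := !![0, 0; 1, 0]

/-- The bivector `Π_{x,y}` at a point of `B`: for `m = !![a,0;z,a⁻¹]` with `a` real it equals
`(!![0,0;iz,0]) ∧ (!![-a,0;0,a⁻¹]) + (1/4)(x a² − y a⁻²)·(E∧F)`. -/
def PiB (x y : ℝ) (m : M2) : M2 ⊗[ℝ] M2 :=
  wedge !![0, 0; Complex.I * m 1 0, 0] !![-(m 0 0), 0; 0, m 1 1]
    + ((x * (m 0 0).re ^ 2 - y * (m 1 1).re ^ 2) / 4) • wedge E F

/-- The group `B = { !![a,0;z,a⁻¹] : a ∈ ℝ, a > 0, z ∈ ℂ }`. -/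
def Bset : Set M2 :=
  {m | ∃ a : ℝ, 0 < a ∧ ∃ z : ℂ, m = !![(a : ℂ), 0; z, ((a⁻¹ : ℝ) : ℂ)]}

/-- Right translation `(u∧v)·h = (uh)∧(vh)` on `M₂(ℂ) ⊗_ℝ M₂(ℂ)`. -/
def rightT (h : M2) : M2 ⊗[ℝ] M2 →ₗ[ℝ] M2 ⊗[ℝ] M2 :=
  TensorProduct.map (LinearMap.mulRight ℝ h) (LinearMap.mulRight ℝ h)

/-- Left translation `g·(u∧v) = (gu)∧(gv)` on `M₂(ℂ) ⊗_ℝ M₂(ℂ)`. -/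
def leftT (g : M2) : M2 ⊗[ℝ] M2 →ₗ[ℝ] M2 ⊗[ℝ] M2 :=
  TensorProduct.map (LinearMap.mulLeft ℝ g) (LinearMap.mulLeft ℝ g)

def e00 : M2 := !![1,0;0,0]
def e11 : M2 := !![0,0;0,1]

set_option maxHeartbeats 2000000 in
/-- for all `x,y,z ∈ ℝ` and `g,h ∈ B`, the multiplicativity identity
`Π_{x,z}(gh) = Π_{x,y}(g)·h + g·Π_{y,z}(h)` holds in `M₂(ℂ) ⊗_ℝ M₂(ℂ)`. -/
theorem statement8 (x y z : ℝ) (g h : M2) (hg : g ∈ Bset) (hh : h ∈ Bset) :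
    PiB x z (g * h) = rightT h (PiB x y g) + leftT g (PiB y z h) := by
  obtain ⟨a, ha, zg, rfl⟩ := hg
  obtain ⟨b, hb, zh, rfl⟩ := hh
  have ha' : a ≠ 0 := ne_of_gt ha
  have hb' : b ≠ 0 := ne_of_gt hb
  have hgh : (!![(a : ℂ), 0; zg, ((a⁻¹ : ℝ) : ℂ)] : M2) * !![(b : ℂ), 0; zh, ((b⁻¹ : ℝ) : ℂ)]
      = !![((a*b : ℝ) : ℂ), 0; zg * b + (a⁻¹ : ℝ) * zh, (((a*b)⁻¹ : ℝ) : ℂ)] := by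
    ext i j
    fin_cases i <;> fin_cases j <;>
      simp [Matrix.mul_apply, Fin.sum_univ_two] <;> push_cast <;> (try constructor) <;> first | ring1 | trivial
  have hW : (!![0, 0; Complex.I * (zg * b + (a⁻¹ : ℝ) * zh), 0] : M2)
      = (-(zg.im*b + a⁻¹*zh.im)) • F + (zg.re*b + a⁻¹*zh.re) • E := by
    ext i j
    fin_cases i <;> fin_cases j <;> simp [E, F, Complex.ext_iff] <;> (try constructor) <;> first | ring1 | trivial
  have hA : (!![-(((a*b : ℝ) : ℂ)), 0; 0, (((a*b)⁻¹ : ℝ) : ℂ)] : M2)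
      = (-(a*b)) • e00 + ((a*b)⁻¹) • e11 := by
    ext i j
    fin_cases i <;> fin_cases j <;> simp [e00, e11, Complex.ext_iff]
  have h1 : (!![0, 0; Complex.I * zg, 0] : M2) * !![(b : ℂ), 0; zh, ((b⁻¹ : ℝ) : ℂ)]
      = (-(zg.im*b)) • F + (zg.re*b) • E := by
    ext i j
    fin_cases i <;> fin_cases j <;>
      simp [Matrix.mul_apply, Fin.sum_univ_two, E, F, Complex.ext_iff] <;> (try constructor) <;> first | ring1 | trivial
  have h2 : (!![-((a : ℂ)), 0; 0, ((a⁻¹ : ℝ) : ℂ)] : M2) * !![(b : ℂ), 0; zh, ((b⁻¹ : ℝ) : ℂ)]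
      = (-(a*b)) • e00 + ((a*b)⁻¹) • e11 + (a⁻¹*zh.re) • F + (a⁻¹*zh.im) • E := by
    ext i j
    fin_cases i <;> fin_cases j <;>
      simp [Matrix.mul_apply, Fin.sum_univ_two, e00, e11, E, F, Complex.ext_iff] <;> (try constructor) <;> first | ring1 | trivial
  have h3 : E * (!![(b : ℂ), 0; zh, ((b⁻¹ : ℝ) : ℂ)] : M2) = b • E := by
    ext i j
    fin_cases i <;> fin_cases j <;>
      simp [Matrix.mul_apply, Fin.sum_univ_two, E, Complex.ext_iff]
  have h4 : F * (!![(b : ℂ), 0; zh, ((b⁻¹ : ℝ) : ℂ)] : M2) = b • F := by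
    ext i j
    fin_cases i <;> fin_cases j <;>
      simp [Matrix.mul_apply, Fin.sum_univ_two, F, Complex.ext_iff]
  have h5 : (!![(a : ℂ), 0; zg, ((a⁻¹ : ℝ) : ℂ)] : M2) * !![0, 0; Complex.I * zh, 0]
      = (-(a⁻¹*zh.im)) • F + (a⁻¹*zh.re) • E := by
    ext i j
    fin_cases i <;> fin_cases j <;>
      simp [Matrix.mul_apply, Fin.sum_univ_two, E, F, Complex.ext_iff] <;> (try constructor) <;> first | ring1 | trivial
  have h6 : (!![(a : ℂ), 0; zg, ((a⁻¹ : ℝ) : ℂ)] : M2) * !![-((b : ℂ)), 0; 0, ((b⁻¹ : ℝ) : ℂ)]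
      = (-(a*b)) • e00 + ((a*b)⁻¹) • e11 + (-(b*zg.re)) • F + (-(b*zg.im)) • E := by
    ext i j
    fin_cases i <;> fin_cases j <;>
      simp [Matrix.mul_apply, Fin.sum_univ_two, e00, e11, E, F, Complex.ext_iff] <;> (try constructor) <;> first | ring1 | trivial
  have h7 : (!![(a : ℂ), 0; zg, ((a⁻¹ : ℝ) : ℂ)] : M2) * E = a⁻¹ • E := by
    ext i j
    fin_cases i <;> fin_cases j <;>
      simp [Matrix.mul_apply, Fin.sum_univ_two, E, Complex.ext_iff]
  have h8 : (!![(a : ℂ), 0; zg, ((a⁻¹ : ℝ) : ℂ)] : M2) * F = a⁻¹ • F := by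
    ext i j
    fin_cases i <;> fin_cases j <;>
      simp [Matrix.mul_apply, Fin.sum_univ_two, F, Complex.ext_iff]
  simp only [PiB, hgh, wedge, Fin.isValue, Matrix.of_apply, Matrix.cons_val', Matrix.cons_val_zero, Matrix.empty_val',
    Matrix.cons_val_fin_one, Matrix.cons_val_one, Matrix.head_fin_const, Matrix.head_cons,
    Complex.ofReal_re, map_add, map_sub, _root_.map_smul, TensorProduct.map_tmul,
    LinearMap.mulRight_apply, LinearMap.mulLeft_apply, rightT, leftT]
  rw [hW, hA, h1, h2, h3, h4, h5, h6, h7, h8]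
  simp only [TensorProduct.tmul_add, TensorProduct.add_tmul, TensorProduct.smul_tmul,
    TensorProduct.tmul_smul]
  module
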